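/- In a Euclidean Hurwitz algebra, if u, v are orthonormal vectors orthogonal to 1 and k = u·v, then u·(v·k) = -1, k·(v·u) = 1, and v·(k·u) = -1 (where 1 is the unit element). -/

import Mathlib

/-!
For an element `a` orthogonal to the unit `e`, left and right multiplication by `a` are
skew-adjoint (linearize `‖x y‖² = ‖x‖² ‖y‖²` and put `e` in one slot), and hence square to
`-‖a‖²`. In particular `a a = -‖a‖² e`, and two orthogonal such elements anticommute.
With `k = u v` orthogonal to `e`, `u`, `v` and of norm one, this gives `v u = -k`,
`v k = -(u v) v = u` and `k u = -u (u v) = v`, from which the three products follow.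
-/

open RealInnerProductSpace

theorem inner_map_map_of_norm_map_eq_mul {E F : Type*} [NormedAddCommGroup E]
    [InnerProductSpace ℝ E] [NormedAddCommGroup F] [InnerProductSpace ℝ F]
    (f : E →ₗ[ℝ] F) (c : ℝ) (hf : ∀ x, ‖f x‖ = c * ‖x‖) (x y : E) :
    ⟪f x, f y⟫ = c ^ 2 * ⟪x, y⟫ := by
  rw [real_inner_eq_norm_add_mul_self_sub_norm_mul_self_sub_norm_mul_self_div_two,
    real_inner_eq_norm_add_mul_self_sub_norm_mul_self_sub_norm_mul_self_div_two x y,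
    ← map_add, hf, hf, hf]
  ring

namespace HurwitzAlgebra

variable {A : Type*} [NormedAddCommGroup A] [InnerProductSpace ℝ A]
  {mul : A →ₗ[ℝ] A →ₗ[ℝ] A} {e : A}

theorem inner_mul_mul_left (hmon : ∀ x y, ‖mul x y‖ = ‖x‖ * ‖y‖) (x y z : A) :
    ⟪mul x y, mul x z⟫ = ‖x‖ ^ 2 * ⟪y, z⟫ :=
  inner_map_map_of_norm_map_eq_mul (mul x) ‖x‖ (hmon x) y z

theorem inner_mul_mul_right (hmon : ∀ x y, ‖mul x y‖ = ‖x‖ * ‖y‖) (x y z : A) :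
    ⟪mul x z, mul y z⟫ = ‖z‖ ^ 2 * ⟪x, y⟫ :=
  inner_map_map_of_norm_map_eq_mul (mul.flip z) ‖z‖
    (fun x => (hmon x z).trans (mul_comm _ _)) x y

theorem inner_mul_add_inner_mul (hmon : ∀ x y, ‖mul x y‖ = ‖x‖ * ‖y‖) (a c y w : A) :
    ⟪mul a y, mul c w⟫ + ⟪mul a w, mul c y⟫ = 2 * ⟪a, c⟫ * ⟪y, w⟫ := by
  have hyw := inner_mul_mul_right hmon a c (y + w)
  simp only [map_add, inner_add_left, inner_add_right, inner_mul_mul_right hmon,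
    ← real_inner_self_eq_norm_sq] at hyw
  rw [real_inner_comm y w] at hyw
  linear_combination hyw

theorem inner_mul_left_eq_neg (hmon : ∀ x y, ‖mul x y‖ = ‖x‖ * ‖y‖)
    (hul : ∀ x, mul e x = x) {a : A} (ha : ⟪a, e⟫ = 0) (x y : A) :
    ⟪mul a x, y⟫ = -⟪x, mul a y⟫ := by
  have h := inner_mul_add_inner_mul hmon a e x y
  rw [hul, hul, ha, real_inner_comm x] at h
  linear_combination h

theorem inner_mul_right_eq_neg (hmon : ∀ x y, ‖mul x y‖ = ‖x‖ * ‖y‖)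
    (hur : ∀ x, mul x e = x) {a : A} (ha : ⟪a, e⟫ = 0) (x y : A) :
    ⟪mul x a, y⟫ = -⟪x, mul y a⟫ := by
  have h := inner_mul_add_inner_mul hmon x y a e
  rw [hur, hur, ha] at h
  linear_combination h

theorem mul_mul_left_of_inner_eq_zero (hmon : ∀ x y, ‖mul x y‖ = ‖x‖ * ‖y‖)
    (hul : ∀ x, mul e x = x) {a : A} (ha : ⟪a, e⟫ = 0) (x : A) :
    mul a (mul a x) = -(‖a‖ ^ 2 • x) := by
  refine ext_inner_right ℝ fun y => ?_
  rw [inner_mul_left_eq_neg hmon hul ha, inner_mul_mul_left hmon, inner_neg_left,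
    real_inner_smul_left]

theorem mul_mul_right_of_inner_eq_zero (hmon : ∀ x y, ‖mul x y‖ = ‖x‖ * ‖y‖)
    (hur : ∀ x, mul x e = x) {a : A} (ha : ⟪a, e⟫ = 0) (x : A) :
    mul (mul x a) a = -(‖a‖ ^ 2 • x) := by
  refine ext_inner_right ℝ fun y => ?_
  rw [inner_mul_right_eq_neg hmon hur ha, inner_mul_mul_right hmon, inner_neg_left,
    real_inner_smul_left]

theorem mul_self_of_inner_eq_zero (hmon : ∀ x y, ‖mul x y‖ = ‖x‖ * ‖y‖)
    (hul : ∀ x, mul e x = x) (hur : ∀ x, mul x e = x) {a : A} (ha : ⟪a, e⟫ = 0) :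
    mul a a = -(‖a‖ ^ 2 • e) := by
  simpa only [hur] using mul_mul_left_of_inner_eq_zero hmon hul ha e

theorem mul_swap_of_inner_eq_zero (hmon : ∀ x y, ‖mul x y‖ = ‖x‖ * ‖y‖)
    (hul : ∀ x, mul e x = x) (hur : ∀ x, mul x e = x) {a b : A} (ha : ⟪a, e⟫ = 0)
    (hb : ⟪b, e⟫ = 0) (hab : ⟪a, b⟫ = 0) : mul b a = -mul a b := by
  have hsum := mul_self_of_inner_eq_zero hmon hul hur (a := a + b)
    (by rw [inner_add_left, ha, hb, add_zero])
  simp only [norm_add_sq_real, hab, map_add, LinearMap.add_apply] at hsum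
  rw [mul_self_of_inner_eq_zero hmon hul hur ha, mul_self_of_inner_eq_zero hmon hul hur hb] at hsum
  linear_combination (norm := module) hsum

end HurwitzAlgebra

open HurwitzAlgebra

theorem stmt_16_general {A : Type*} [NormedAddCommGroup A] [InnerProductSpace ℝ A]
    (mul : A →ₗ[ℝ] A →ₗ[ℝ] A) (e : A)
    (hul : ∀ x, mul e x = x) (hur : ∀ x, mul x e = x)
    (hmon : ∀ x y, ‖mul x y‖ = ‖x‖ * ‖y‖)
    (u v k : A) (hu : ‖u‖ = 1) (hv : ‖v‖ = 1)
    (hue : (inner ℝ u e : ℝ) = 0) (hve : (inner ℝ v e : ℝ) = 0)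
    (huv : (inner ℝ u v : ℝ) = 0) (hk : k = mul u v) :
    mul u (mul v k) = -e ∧ mul k (mul v u) = e ∧ mul v (mul k u) = -e := by
  have hk1 : ‖k‖ = 1 := by rw [hk, hmon, hu, hv, one_mul]
  have hke : ⟪k, e⟫ = 0 := by
    rw [hk, inner_mul_left_eq_neg hmon hul hue, hur, real_inner_comm, huv, neg_zero]
  have huk : ⟪u, k⟫ = 0 := by
    have h := inner_mul_mul_left hmon u v e
    rwa [hur, hve, mul_zero, real_inner_comm, ← hk] at h
  have hkv : ⟪k, v⟫ = 0 := by
    have h := inner_mul_mul_right hmon u e v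
    rwa [hul, hue, mul_zero, ← hk] at h
  have hvu : mul v u = -k := hk ▸ mul_swap_of_inner_eq_zero hmon hul hur hue hve huv
  have hvk : mul v k = u := by
    rw [mul_swap_of_inner_eq_zero hmon hul hur hke hve hkv, hk,
      mul_mul_right_of_inner_eq_zero hmon hur hve, hv, one_pow, one_smul, neg_neg]
  have hku : mul k u = v := by
    rw [mul_swap_of_inner_eq_zero hmon hul hur hue hke huk, hk,
      mul_mul_left_of_inner_eq_zero hmon hul hue, hu, one_pow, one_smul, neg_neg]
  refine ⟨?_, ?_, ?_⟩
  · rw [hvk, mul_self_of_inner_eq_zero hmon hul hur hue, hu, one_pow, one_smul]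
  · rw [hvu, map_neg, mul_self_of_inner_eq_zero hmon hul hur hke, hk1, one_pow, one_smul,
      neg_neg]
  · rw [hku, mul_self_of_inner_eq_zero hmon hul hur hve, hv, one_pow, one_smul]

theorem stmt_16 {A : Type*} [NormedAddCommGroup A] [InnerProductSpace ℝ A]
    (mul : A →ₗ[ℝ] A →ₗ[ℝ] A) (e : A) (he : ‖e‖ = 1)
    (hul : ∀ x, mul e x = x) (hur : ∀ x, mul x e = x)
    (hmon : ∀ x y, ‖mul x y‖ = ‖x‖ * ‖y‖)
    (u v k : A) (hu : ‖u‖ = 1) (hv : ‖v‖ = 1)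
    (hue : (inner ℝ u e : ℝ) = 0) (hve : (inner ℝ v e : ℝ) = 0)
    (huv : (inner ℝ u v : ℝ) = 0) (hk : k = mul u v) :
    mul u (mul v k) = -e ∧ mul k (mul v u) = e ∧ mul v (mul k u) = -e :=
  stmt_16_general mul e hul hur hmon u v k hu hv hue hve huv hk
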